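/- arXiv:2112.11634 — 2 statements merged into one kernel-verified Lean document; each statement's English description precedes it below -/
import Mathlib

section
/- A configuration of the 15-puzzle with the blank in the bottom-right corner is reachable from the solved state only if the tile permutation is even. -/
/-! Every move composes the tile permutation with a transposition, flipping its sign, and moves
the blank to a cell of the other checkerboard colour. Hence the sign of the permutation times the
colour `(-1) ^ (row + column)` of the blank is invariant, and with the blank back in its starting
cell the sign must be that of the identity. -/

/-- Two cells of the 4×4 grid are adjacent: differ by one in exactly one coordinate. -/
def Adj (b b' : Fin 4 × Fin 4) : Prop :=
  (b.1 = b'.1 ∧ (b.2.val = b'.2.val + 1 ∨ b'.2.val = b.2.val + 1)) ∨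
  (b.2 = b'.2 ∧ (b.1.val = b'.1.val + 1 ∨ b'.1.val = b.1.val + 1))

/-- Linear index of a cell in `Fin 16`. -/
def pos (b : Fin 4 × Fin 4) : Fin 16 :=
  ⟨b.1.val * 4 + b.2.val, by have := b.1.isLt; have := b.2.isLt; omega⟩

/-- One elementary move: the blank swaps with an adjacent tile. -/
def Move (s t : Equiv.Perm (Fin 16) × (Fin 4 × Fin 4)) : Prop :=
  Adj s.2 t.2 ∧ t.1 = Equiv.swap (pos s.2) (pos t.2) * s.1

/-- Reachability: reflexive-transitive closure of elementary moves. -/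
def Reachable : (Equiv.Perm (Fin 16) × (Fin 4 × Fin 4)) →
    (Equiv.Perm (Fin 16) × (Fin 4 × Fin 4)) → Prop :=
  Relation.ReflTransGen Move

def cellColor (b : Fin 4 × Fin 4) : ℤˣ := (-1) ^ (b.1.val + b.2.val)

def signColor (s : Equiv.Perm (Fin 16) × (Fin 4 × Fin 4)) : ℤˣ :=
  Equiv.Perm.sign s.1 * cellColor s.2

theorem Adj.pos_ne {b b' : Fin 4 × Fin 4} (h : Adj b b') : pos b ≠ pos b' := by
  intro hpos
  have hval : b.1.val * 4 + b.2.val = b'.1.val * 4 + b'.2.val := congrArg Fin.val hpos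
  rcases h with ⟨hrow, _⟩ | ⟨hcol, _⟩
  · have := congrArg Fin.val hrow; omega
  · have := congrArg Fin.val hcol; omega

theorem Adj.cellColor_eq_neg {b b' : Fin 4 × Fin 4} (h : Adj b b') :
    cellColor b' = -cellColor b := by
  have hstep : b'.1.val + b'.2.val = b.1.val + b.2.val + 1 ∨
      b.1.val + b.2.val = b'.1.val + b'.2.val + 1 := by
    rcases h with ⟨hrow, _⟩ | ⟨hcol, _⟩
    · have := congrArg Fin.val hrow; omega
    · have := congrArg Fin.val hcol; omega
  unfold cellColor
  rcases hstep with hstep | hstep <;> rw [hstep, pow_succ] <;> simp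

theorem Move.signColor_eq {s t : Equiv.Perm (Fin 16) × (Fin 4 × Fin 4)} (h : Move s t) :
    signColor t = signColor s := by
  obtain ⟨hadj, hperm⟩ := h
  rw [signColor, signColor, hperm, map_mul, Equiv.Perm.sign_swap hadj.pos_ne,
    hadj.cellColor_eq_neg, neg_one_mul, neg_mul_neg]

theorem Reachable.signColor_eq {s t : Equiv.Perm (Fin 16) × (Fin 4 × Fin 4)}
    (h : Reachable s t) : signColor t = signColor s := by
  induction h with
  | refl => rfl
  | tail _ hmove ih => exact hmove.signColor_eq.trans ih

/-- A configuration with the blank in the bottom-right corner is reachable from the solved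
state only if the tile permutation is even. -/
theorem reachable_corner_sign (σ : Equiv.Perm (Fin 16))
    (h : Reachable (1, ((3 : Fin 4), (3 : Fin 4))) (σ, ((3 : Fin 4), (3 : Fin 4)))) :
    Equiv.Perm.sign σ = 1 := by
  simpa [signColor] using h.signColor_eq
end

section
/- If a sequence of n elementary moves of the 15-puzzle starts and ends with the blank in the same cell, then the resulting tile permutation, being a product of n transpositions with n even, is an even permutation; consequently any odd permutation of the tiles (with blank fixed) is unreachable. -/
@[to_additive]
theorem Fin.eq_pow_mul_of_succ_eq_mul {M : Type*} [Monoid M] {n : ℕ} (u : Fin (n + 1) → M)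
    (c : M) (h : ∀ i : Fin n, u i.succ = c * u i.castSucc) (i : Fin (n + 1)) :
    u i = c ^ (i : ℕ) * u 0 := by
  induction i using Fin.induction with
  | zero => simp
  | succ i ih => rw [h, ih, Fin.val_succ, Fin.val_castSucc, pow_succ', mul_assoc]

def cellParity (c : Fin 4 × Fin 4) : ZMod 2 :=
  ((c.1.val + c.2.val : ℕ) : ZMod 2)

theorem Adj.cellParity_eq {b b' : Fin 4 × Fin 4} (h : Adj b b') :
    cellParity b' = 1 + cellParity b := by
  have hsum : (b'.1.val + b'.2.val) % 2 = (1 + (b.1.val + b.2.val)) % 2 := by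
    rcases h with ⟨he, h⟩ | ⟨he, h⟩ <;> rw [Fin.ext_iff] at he <;> omega
  simpa only [cellParity, Nat.cast_add, Nat.cast_one] using
    (ZMod.natCast_eq_natCast_iff' _ (1 + (b.1.val + b.2.val)) 2).mpr hsum

theorem Adj.ne {b b' : Fin 4 × Fin 4} (h : Adj b b') : b ≠ b' := by
  rintro rfl
  rcases h with ⟨-, h⟩ | ⟨-, h⟩ <;> omega

theorem pos_injective : Function.Injective pos := by
  intro b b' h
  have h2 := b.2.isLt
  have h2' := b'.2.isLt
  simp only [pos, Fin.mk.injEq] at h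
  ext <;> omega

theorem Move.sign_fst {s t : Equiv.Perm (Fin 16) × (Fin 4 × Fin 4)} (h : Move s t) :
    Equiv.Perm.sign t.1 = -1 * Equiv.Perm.sign s.1 := by
  rw [h.2, map_mul, Equiv.Perm.sign_swap (pos_injective.ne h.1.ne)]

/-- A sequence of n moves starting at the solved state and returning the blank to its cell
has n even and yields an even tile permutation; hence odd permutations are unreachable. -/
theorem blank_fixed_even_perm (n : ℕ)
    (f : Fin (n + 1) → Equiv.Perm (Fin 16) × (Fin 4 × Fin 4)) (b : Fin 4 × Fin 4)
    (h0 : f 0 = (1, b)) (hstep : ∀ i : Fin n, Move (f i.castSucc) (f i.succ))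
    (hret : (f (Fin.last n)).2 = b) :
    Even n ∧ Equiv.Perm.sign (f (Fin.last n)).1 = 1 := by
  have hparity := Fin.eq_nsmul_add_of_succ_eq_add (fun i => cellParity (f i).2) 1
    (fun i => (hstep i).1.cellParity_eq) (Fin.last n)
  have hsign := Fin.eq_pow_mul_of_succ_eq_mul (fun i => Equiv.Perm.sign (f i).1) (-1)
    (fun i => (hstep i).sign_fst) (Fin.last n)
  simp only [hret, h0, Fin.val_last, nsmul_one, right_eq_add] at hparity
  have hn : Even n := ZMod.natCast_eq_zero_iff_even.mp hparity
  simp only [h0, Fin.val_last, map_one, mul_one, hn.neg_one_pow] at hsign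
  exact ⟨hn, hsign⟩
end
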